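/- Let W = [W1; W2] be an (m+p)×m continuous-time minimum-phase matrix over K = RatFunc ℂ, where the m×m block W1 is invertible over K, and set H := W2 W1⁻¹. Then the following are equivalent: (i) H is stable in the continuous-time sense, i.e. every pole α of H satisfies Re α ≤ 0; (ii) W1 is continuous-time minimum-phase. (The continuous-time version of the paper's Theorem 3.2, which the paper states holds by substituting continuous-time functions.) -/

import Mathlib

/-!
Off the poles of its factors, evaluation at a point `α` is multiplicative, and it turns `W1⁻¹`
into `W1(α)⁻¹` as soon as `W1(α)` is invertible; both facts come from the subring of rational
functions regular at `α` and the evaluation homomorphism on it. In the open right half plane `W1`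
and `W2` have no poles. If `H` is stable there too, then `W(α)` stacks `W1(α)` on
`H(α) W1(α)`, so its full column rank forces `W1(α)` to have full rank. Conversely, if `W1(α)`
has full rank, then `W1⁻¹` and hence `H = W2 W1⁻¹` is regular at `α`.
-/

open Matrix

noncomputable section

abbrev K : Type := RatFunc ℂ

/-- `α` is a pole of `q`: a root of the denominator of `q` in lowest terms. -/
def IsPole (α : ℂ) (q : K) : Prop := Polynomial.eval α (RatFunc.denom q) = 0

/-- `α` is a pole of a matrix if it is a pole of some entry. -/
def MIsPole {I J : Type} (α : ℂ) (W : Matrix I J K) : Prop := ∃ i j, IsPole α (W i j)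

/-- Evaluation of a rational function at a point. -/
def evalAt (α : ℂ) (q : K) : ℂ := RatFunc.eval (RingHom.id ℂ) α q

/-- Entrywise evaluation of a matrix of rational functions. -/
def MEval {I J : Type} (α : ℂ) (W : Matrix I J K) : Matrix I J ℂ := W.map (evalAt α)

/-- Continuous-time minimum phase: all poles in the open left half plane and full
column rank at every point of the open right half plane. -/
def MinPhaseC {n m : Type} [Fintype n] [Fintype m] (W : Matrix n m K) : Prop :=
  (∀ α : ℂ, MIsPole α W → α.re < 0) ∧
  (∀ α : ℂ, 0 < α.re → (MEval α W).rank = Fintype.card m)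

theorem Matrix.map_nonsing_inv {R S : Type*} [CommRing R] [CommRing S] {n : Type*} [Fintype n]
    [DecidableEq n] (f : R →+* S) {M : Matrix n n R} (hM : IsUnit M.det) :
    (M.map f)⁻¹ = M⁻¹.map f :=
  inv_eq_left_inv <| by
    rw [← Matrix.map_mul, nonsing_inv_mul M hM, Matrix.map_one _ f.map_zero f.map_one]

theorem Matrix.isUnit_det_of_rank_eq_card {F : Type*} [Field F] {n : Type*} [Fintype n]
    [DecidableEq n] {A : Matrix n n F} (h : A.rank = Fintype.card n) : IsUnit A.det := by
  have hrange : LinearMap.range A.mulVecLin = ⊤ :=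
    Submodule.eq_top_of_finrank_eq (by rw [← rank, h, Module.finrank_fintype_fun_eq_card])
  rw [← isUnit_iff_isUnit_det, ← mulVec_surjective_iff_isUnit]
  exact LinearMap.range_eq_top.1 hrange

theorem Matrix.rank_fromRows_mul_le {R : Type*} [CommRing R] [StrongRankCondition R]
    {m n p : Type*} [Fintype m] [Fintype n] [DecidableEq m]
    (A : Matrix m n R) (C : Matrix p m R) : (fromRows A (C * A)).rank ≤ A.rank := by
  calc (fromRows A (C * A)).rank = (fromRows 1 C * A).rank := by
        rw [fromRows_mul, Matrix.one_mul]
    _ ≤ A.rank := rank_mul_le_right _ _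

namespace RatFunc

variable {F : Type*} [Field F]

theorem denom_neg_dvd (q : RatFunc F) : denom (-q) ∣ denom q := by
  have h := denom_mul_dvd (C (-1)) q
  rwa [denom_C, one_mul, map_neg, map_one, neg_one_mul] at h

def regularAt (a : F) : Subring (RatFunc F) where
  carrier := {q | (denom q).eval a ≠ 0}
  one_mem' := by simp [denom_one]
  zero_mem' := by simp [denom_zero]
  mul_mem' {x y} hx hy h := by
    have := Polynomial.eval_eq_zero_of_dvd_of_eval_eq_zero (denom_mul_dvd x y) h
    rw [Polynomial.eval_mul] at this
    exact (mul_eq_zero.1 this).elim hx hy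
  add_mem' {x y} hx hy h := by
    have := Polynomial.eval_eq_zero_of_dvd_of_eval_eq_zero (denom_add_dvd x y) h
    rw [Polynomial.eval_mul] at this
    exact (mul_eq_zero.1 this).elim hx hy
  neg_mem' {q} hq h := hq (Polynomial.eval_eq_zero_of_dvd_of_eval_eq_zero (denom_neg_dvd q) h)

theorem mem_regularAt {a : F} {q : RatFunc F} : q ∈ regularAt a ↔ (denom q).eval a ≠ 0 :=
  Iff.rfl

def evalRegularAt (a : F) : regularAt a →+* F where
  toFun q := eval (RingHom.id F) a q
  map_one' := eval_one _ a
  map_zero' := eval_zero _ a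
  map_mul' x y := eval_mul _ a x.2 y.2
  map_add' x y := eval_add _ a x.2 y.2

theorem inv_mem_regularAt {a : F} {q : RatFunc F} (h : eval (RingHom.id F) a q ≠ 0) :
    q⁻¹ ∈ regularAt a := by
  have hnum : (num q).eval a ≠ 0 := fun hnum => h (by simp [eval, Polynomial.eval₂_id, hnum])
  have hq0 : q ≠ 0 := by rintro rfl; exact h (eval_zero _ a)
  exact fun h' => hnum (Polynomial.eval_eq_zero_of_dvd_of_eval_eq_zero (denom_inv_dvd hq0) h')

theorem isUnit_of_evalRegularAt_ne_zero {a : F} {q : regularAt a} (h : evalRegularAt a q ≠ 0) :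
    IsUnit q :=
  IsUnit.of_mul_eq_one ⟨_, inv_mem_regularAt h⟩ <|
    Subtype.ext <| mul_inv_cancel₀ fun hq => h (by simp [evalRegularAt, hq])

end RatFunc

open RatFunc

section Poles

variable {I J L : Type} {α : ℂ}

theorem not_mIsPole_iff {A : Matrix I J K} :
    ¬ MIsPole α A ↔ ∀ i j, A i j ∈ regularAt α := by
  simp [MIsPole, IsPole, mem_regularAt]

theorem exists_map_subtype_of_not_mIsPole {A : Matrix I J K} (hA : ¬ MIsPole α A) :
    ∃ A' : Matrix I J (regularAt α), A'.map (regularAt α).subtype = A :=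
  ⟨fun i j => ⟨A i j, not_mIsPole_iff.1 hA i j⟩, rfl⟩

theorem not_mIsPole_map_subtype (A : Matrix I J (regularAt α)) :
    ¬ MIsPole α (A.map (regularAt α).subtype) :=
  not_mIsPole_iff.2 fun i j => (A i j).2

theorem mEval_map_subtype (A : Matrix I J (regularAt α)) :
    MEval α (A.map (regularAt α).subtype) = A.map (evalRegularAt α) :=
  rfl

theorem mIsPole_fromRows_iff {A : Matrix I L K} {B : Matrix J L K} :
    MIsPole α (fromRows A B) ↔ MIsPole α A ∨ MIsPole α B := by
  simp [MIsPole]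

theorem mEval_fromRows (A : Matrix I L K) (B : Matrix J L K) :
    MEval α (fromRows A B) = fromRows (MEval α A) (MEval α B) :=
  fromRows_map A B _

variable [Fintype J] {A : Matrix I J K} {B : Matrix J L K}

theorem not_mIsPole_mul (hA : ¬ MIsPole α A) (hB : ¬ MIsPole α B) : ¬ MIsPole α (A * B) := by
  obtain ⟨A', rfl⟩ := exists_map_subtype_of_not_mIsPole hA
  obtain ⟨B', rfl⟩ := exists_map_subtype_of_not_mIsPole hB
  rw [← Matrix.map_mul]
  exact not_mIsPole_map_subtype _

theorem mEval_mul (hA : ¬ MIsPole α A) (hB : ¬ MIsPole α B) :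
    MEval α (A * B) = MEval α A * MEval α B := by
  obtain ⟨A', rfl⟩ := exists_map_subtype_of_not_mIsPole hA
  obtain ⟨B', rfl⟩ := exists_map_subtype_of_not_mIsPole hB
  rw [← Matrix.map_mul, mEval_map_subtype, mEval_map_subtype, mEval_map_subtype, Matrix.map_mul]

theorem not_mIsPole_inv [DecidableEq J] {A : Matrix J J K} (hA : ¬ MIsPole α A)
    (hdet : IsUnit (MEval α A).det) : ¬ MIsPole α A⁻¹ := by
  obtain ⟨A', rfl⟩ := exists_map_subtype_of_not_mIsPole hA
  rw [mEval_map_subtype, ← RingHom.mapMatrix_apply, ← RingHom.map_det] at hdet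
  have hA' : IsUnit A'.det := isUnit_of_evalRegularAt_ne_zero hdet.ne_zero
  rw [map_nonsing_inv _ hA']
  exact not_mIsPole_map_subtype _

end Poles

theorem H_stable_iff_W1_minimum_phase_continuous (m p : ℕ)
    (W1 : Matrix (Fin m) (Fin m) K) (W2 : Matrix (Fin p) (Fin m) K)
    (hW1 : IsUnit W1.det)
    (hWmp : MinPhaseC (Matrix.fromRows W1 W2)) :
    (∀ α : ℂ, MIsPole α (W2 * W1⁻¹) → α.re ≤ 0) ↔ MinPhaseC W1 := by
  obtain ⟨hpole, hrank⟩ := hWmp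
  have hW1pole α (h : MIsPole α W1) : α.re < 0 := hpole α (mIsPole_fromRows_iff.2 (.inl h))
  have hW2pole α (h : MIsPole α W2) : α.re < 0 := hpole α (mIsPole_fromRows_iff.2 (.inr h))
  constructor
  · refine fun hH => ⟨hW1pole, fun α hα => le_antisymm (rank_le_card_width _) ?_⟩
    have hW1α : ¬ MIsPole α W1 := fun h => (hW1pole α h).not_gt hα
    have hHα : ¬ MIsPole α (W2 * W1⁻¹) := fun h => (hH α h).not_gt hα
    have hW2 : W2 = W2 * W1⁻¹ * W1 := by
      rw [Matrix.mul_assoc, nonsing_inv_mul W1 hW1, Matrix.mul_one]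
    calc Fintype.card (Fin m)
        = (fromRows (MEval α W1) (MEval α (W2 * W1⁻¹) * MEval α W1)).rank := by
          rw [← mEval_mul hHα hW1α, ← hW2, ← mEval_fromRows, hrank α hα]
      _ ≤ (MEval α W1).rank := rank_fromRows_mul_le _ _
  · rintro ⟨-, hW1rank⟩ α hHpole
    by_contra! hα
    have hW1α : ¬ MIsPole α W1 := fun h => (hW1pole α h).not_gt hα
    have hW2α : ¬ MIsPole α W2 := fun h => (hW2pole α h).not_gt hα
    have hdet := isUnit_det_of_rank_eq_card (hW1rank α hα)
    exact not_mIsPole_mul hW2α (not_mIsPole_inv hW1α hdet) hHpole
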